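/- The maps Φ_K(G) = G ∘ π_K and Ψ_K(F) = F ∘ σ_K are mutually inverse linear isometries (for the sup norm) between C_0([0, λ(K)]) and the space X_K of continuous functions F on K with F(min K) = 0 that are constant on each fiber of π_K. In particular, X_K = {G ∘ π_K : G ∈ C_0([0, λ(K)])}. -/

import Mathlib

open MeasureTheory Set

/-- Measure projection `π_K`. -/
noncomputable def piProj (K : Set ℝ) (x : ℝ) : ℝ :=
  (volume (Set.Icc (sInf K) x ∩ K)).toReal

/-- Left-endpoint selector `σ_K`. -/
noncomputable def sigmaSel (K : Set ℝ) (t : ℝ) : ℝ :=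
  sInf {x ∈ K | piProj K x = t}

/-- Membership in the space `X_K`: continuous on `K`, vanishing at `min K`,
constant on each fiber of `π_K`. -/
def MemXK (K : Set ℝ) (F : ℝ → ℝ) : Prop :=
  ContinuousOn F K ∧ F (sInf K) = 0 ∧
    ∀ x ∈ K, ∀ y ∈ K, piProj K x = piProj K y → F x = F y

/-- Membership in `C_0([0, λ(K)])`: continuous on the interval and vanishing at `0`. -/
def MemC0 (v : ℝ) (G : ℝ → ℝ) : Prop :=
  ContinuousOn G (Set.Icc 0 v) ∧ G 0 = 0

/-!
`π_K` is 1-Lipschitz and maps `K` onto `[0, λ(K)]`: by the intermediate value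
theorem every `t` is `π_K c` for some `c ∈ [min K, max K]`, and `π_K c = π_K x` for the largest
`x ∈ K` below `c`. Each fibre `K ∩ π_K⁻¹(t)` is compact, so `σ_K t` lies in it; this makes
`Φ_K` and `Ψ_K` mutually inverse. As a continuous surjection from a compact space,
`π_K : K → [0, λ(K)]` is a quotient map, which gives continuity of `F ∘ σ_K`; the two sup norms
agree because `G ∘ π_K` on `K` and `G` on `[0, λ(K)]` take the same values.
-/

lemma Real.biSup_image_of_nonneg {ι ι' : Type*} {f : ι → ι'} {g : ι' → ℝ} {s : Set ι}
    (hg : ∀ y, 0 ≤ g y) (hb : BddAbove (g '' (f '' s))) :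
    ⨆ y ∈ f '' s, g y = ⨆ x ∈ s, g (f x) := by
  refine ciSup_image ?_ (Real.sSup_empty ▸ Real.iSup_nonneg fun _ => hg _)
  rwa [image_image, image_eq_range] at hb

section

variable {K : Set ℝ}

lemma piProj_le_add_dist (K : Set ℝ) (x y : ℝ) : piProj K x ≤ piProj K y + dist x y := by
  have hcover : Icc (sInf K) x ∩ K ⊆ (Icc (sInf K) y ∩ K) ∪ Ioc y x := by
    rintro z ⟨⟨hz₁, hz₂⟩, hzK⟩
    rcases le_or_gt z y with h | h
    · exact Or.inl ⟨⟨hz₁, h⟩, hzK⟩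
    · exact Or.inr ⟨h, hz₂⟩
  have hfin : volume (Icc (sInf K) y ∩ K) ≠ ⊤ :=
    measure_ne_top_of_subset inter_subset_left (by simp)
  calc piProj K x
      ≤ (volume (Icc (sInf K) y ∩ K) + ENNReal.ofReal (x - y)).toReal := by
        refine ENNReal.toReal_mono (by simp [hfin]) ?_
        exact (measure_mono hcover).trans ((measure_union_le _ _).trans (by simp))
    _ ≤ piProj K y + dist x y := by
        rw [ENNReal.toReal_add hfin ENNReal.ofReal_ne_top, Real.dist_eq, ENNReal.toReal_ofReal']
        exact add_le_add_right (max_le (le_abs_self (x - y)) (abs_nonneg (x - y))) _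

lemma lipschitzWith_one_piProj (K : Set ℝ) : LipschitzWith 1 (piProj K) :=
  LipschitzWith.of_le_add (piProj_le_add_dist K)

lemma continuous_piProj (K : Set ℝ) : Continuous (piProj K) :=
  (lipschitzWith_one_piProj K).continuous

lemma piProj_sInf (K : Set ℝ) : piProj K (sInf K) = 0 := by
  simp [piProj, measure_mono_null inter_subset_left]

lemma piProj_mem_Icc (hK : volume K ≠ ⊤) (x : ℝ) :
    piProj K x ∈ Icc 0 (volume K).toReal :=
  ⟨ENNReal.toReal_nonneg, ENNReal.toReal_mono hK (measure_mono inter_subset_right)⟩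

lemma piProj_sSup_inter_Iic (hK : IsCompact K) {c : ℝ} (hc : (K ∩ Iic c).Nonempty) :
    piProj K (sSup (K ∩ Iic c)) = piProj K c := by
  have hcK : IsCompact (K ∩ Iic c) := hK.inter_right isClosed_Iic
  have hmem : sSup (K ∩ Iic c) ∈ K ∩ Iic c := hcK.sSup_mem hc
  have hsame : Icc (sInf K) (sSup (K ∩ Iic c)) ∩ K = Icc (sInf K) c ∩ K := by
    ext z
    constructor
    · rintro ⟨⟨hz₁, hz₂⟩, hzK⟩
      exact ⟨⟨hz₁, hz₂.trans hmem.2⟩, hzK⟩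
    · rintro ⟨⟨hz₁, hz₂⟩, hzK⟩
      exact ⟨⟨hz₁, le_csSup hcK.bddAbove ⟨hzK, hz₂⟩⟩, hzK⟩
  rw [piProj, piProj, hsame]

lemma piProj_image (hK : IsCompact K) (hne : K.Nonempty) :
    piProj K '' K = Icc 0 (volume K).toReal := by
  refine (image_subset_range _ _).trans
    (range_subset_iff.2 (piProj_mem_Icc hK.measure_lt_top.ne)) |>.antisymm ?_
  intro t ht
  have hinf : sInf K ∈ K := hK.sInf_mem hne
  have hsup : sSup K ∈ K := hK.sSup_mem hne
  have hKsub : K ⊆ Icc (sInf K) (sSup K) := fun z hz =>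
    ⟨csInf_le hK.bddBelow hz, le_csSup hK.bddAbove hz⟩
  have hend : piProj K (sSup K) = (volume K).toReal := by
    rw [piProj, inter_eq_right.mpr hKsub]
  obtain ⟨c, hc, rfl⟩ : t ∈ piProj K '' Icc (sInf K) (sSup K) :=
    intermediate_value_Icc (hKsub hsup).1 (continuous_piProj K).continuousOn
      (by rwa [piProj_sInf, hend])
  have hKc : (K ∩ Iic c).Nonempty := ⟨sInf K, hinf, hc.1⟩
  exact ⟨_, (hK.inter_right isClosed_Iic |>.sSup_mem hKc).1, piProj_sSup_inter_Iic hK hKc⟩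

lemma sigmaSel_mem_fiber (hK : IsCompact K) {t : ℝ} (ht : t ∈ piProj K '' K) :
    sigmaSel K t ∈ K ∧ piProj K (sigmaSel K t) = t :=
  (hK.inter_right (isClosed_singleton.preimage (continuous_piProj K))).sInf_mem ht

variable {F : ℝ → ℝ}

lemma comp_sigmaSel_piProj (hK : IsCompact K)
    (hfib : ∀ x ∈ K, ∀ y ∈ K, piProj K x = piProj K y → F x = F y) {x : ℝ} (hx : x ∈ K) :
    F (sigmaSel K (piProj K x)) = F x :=
  have hσ := sigmaSel_mem_fiber hK (mem_image_of_mem _ hx)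
  hfib _ hσ.1 _ hx hσ.2

lemma continuousOn_comp_sigmaSel (hK : IsCompact K) (hF : ContinuousOn F K)
    (hfib : ∀ x ∈ K, ∀ y ∈ K, piProj K x = piProj K y → F x = F y) :
    ContinuousOn (F ∘ sigmaSel K) (piProj K '' K) := by
  have : CompactSpace K := isCompact_iff_compactSpace.mp hK
  let p : K → piProj K '' K := fun x => ⟨piProj K x, mem_image_of_mem _ x.2⟩
  have hp : Continuous p := ((continuous_piProj K).comp continuous_subtype_val).subtype_mk _
  have hq : Topology.IsQuotientMap p := by
    refine hp.isClosedMap.isQuotientMap hp ?_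
    rintro ⟨t, x, hx, rfl⟩
    exact ⟨⟨x, hx⟩, rfl⟩
  rw [continuousOn_iff_continuous_domRestrict, hq.continuous_iff]
  have hlift : (piProj K '' K).domRestrict (F ∘ sigmaSel K) ∘ p = K.domRestrict F :=
    funext fun x => comp_sigmaSel_piProj hK hfib x.2
  rw [hlift]
  exact continuousOn_iff_continuous_domRestrict.mp hF

lemma memXK_comp_piProj (hK : volume K ≠ ⊤) {G : ℝ → ℝ} (hG : MemC0 (volume K).toReal G) :
    MemXK K (G ∘ piProj K) :=
  ⟨hG.1.comp (continuous_piProj K).continuousOn fun x _ => piProj_mem_Icc hK x,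
    by simp [piProj_sInf, hG.2], fun x _ y _ hxy => by simp [hxy]⟩

lemma MemXK.congr (hF : MemXK K F) (hK : sInf K ∈ K) {F' : ℝ → ℝ} (h : EqOn F F' K) :
    MemXK K F' :=
  ⟨hF.1.congr h.symm, h hK ▸ hF.2.1,
    fun x hx y hy hxy => h hx ▸ h hy ▸ hF.2.2 x hx y hy hxy⟩

lemma MemXK.memC0_comp_sigmaSel (hF : MemXK K F) (hK : IsCompact K) (hne : K.Nonempty) :
    MemC0 (volume K).toReal (F ∘ sigmaSel K) := by
  have himg := piProj_image hK hne
  refine ⟨himg ▸ continuousOn_comp_sigmaSel hK hF.1 hF.2.2, ?_⟩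
  have hinf : sInf K ∈ K := hK.sInf_mem hne
  have := comp_sigmaSel_piProj hK hF.2.2 hinf
  rw [piProj_sInf] at this
  rw [Function.comp_apply, this, hF.2.1]

end

theorem stmt10 (K : Set ℝ) (hK : IsCompact K) (hpos : 0 < volume K) :
    -- Φ_K maps C_0 into X_K, Ψ_K ∘ Φ_K = id, and Φ_K is isometric
    (∀ G : ℝ → ℝ, MemC0 (volume K).toReal G →
      MemXK K (G ∘ piProj K) ∧
      (∀ t ∈ Set.Icc (0 : ℝ) (volume K).toReal,
        (G ∘ piProj K) (sigmaSel K t) = G t) ∧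
      (⨆ x ∈ K, |(G ∘ piProj K) x|) =
        ⨆ t ∈ Set.Icc (0 : ℝ) (volume K).toReal, |G t|) ∧
    -- Ψ_K maps X_K into C_0, Φ_K ∘ Ψ_K = id, and Ψ_K is isometric
    (∀ F : ℝ → ℝ, MemXK K F →
      MemC0 (volume K).toReal (F ∘ sigmaSel K) ∧
      (∀ x ∈ K, (F ∘ sigmaSel K) (piProj K x) = F x) ∧
      (⨆ t ∈ Set.Icc (0 : ℝ) (volume K).toReal, |(F ∘ sigmaSel K) t|) =
        ⨆ x ∈ K, |F x|) ∧
    -- additivity and homogeneity of Φ_K are immediate: `(G₁+G₂)∘π = G₁∘π + G₂∘π`;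
    -- X_K is exactly the set of functions of the form `G ∘ π_K` on `K`
    (∀ F : ℝ → ℝ, MemXK K F ↔
      ∃ G : ℝ → ℝ, MemC0 (volume K).toReal G ∧ ∀ x ∈ K, F x = G (piProj K x)) := by
  have hne : K.Nonempty := nonempty_of_measure_ne_zero hpos.ne'
  have hfin : volume K ≠ ⊤ := hK.measure_lt_top.ne
  have himg : piProj K '' K = Icc 0 (volume K).toReal := piProj_image hK hne
  refine ⟨fun G hG => ⟨memXK_comp_piProj hfin hG, fun t ht => ?_, ?_⟩,
    fun F hF => ⟨hF.memC0_comp_sigmaSel hK hne, fun x hx => comp_sigmaSel_piProj hK hF.2.2 hx, ?_⟩,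
    fun F => ⟨fun hF => ⟨_, hF.memC0_comp_sigmaSel hK hne,
      fun x hx => (comp_sigmaSel_piProj hK hF.2.2 hx).symm⟩,
      fun ⟨G, hG, hFG⟩ => (memXK_comp_piProj hfin hG).congr (hK.sInf_mem hne) fun x hx =>
        (hFG x hx).symm⟩⟩
  · exact congrArg G (sigmaSel_mem_fiber hK (himg ▸ ht)).2
  · rw [← himg, Real.biSup_image_of_nonneg (fun _ => abs_nonneg _)
      (himg ▸ isCompact_Icc.bddAbove_image hG.1.abs)]
    rfl
  · have hbdd := isCompact_Icc.bddAbove_image (hF.memC0_comp_sigmaSel hK hne).1.abs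
    rw [← himg] at hbdd ⊢
    rw [Real.biSup_image_of_nonneg (fun _ => abs_nonneg _) hbdd]
    exact iSup_congr fun x => iSup_congr fun hx => by
      rw [Function.comp_apply, comp_sigmaSel_piProj hK hF.2.2 hx]
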